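/- arXiv:2511.16611 — 7 statements merged into one kernel-verified Lean document; each statement's English description precedes it below -/
import Mathlib

section
/- The Černý automaton C_n is contracting: for any two states p, q with d(p,q) > 1, there exists a word u such that 1 ≤ d(p·u, q·u) < d(p,q). -/
def wordAct {n : ℕ} {A : Type} (δ : Fin n → A → Fin n) (p : Fin n) (u : List A) : Fin n :=
  u.foldl δ p

noncomputable def relDist {n : ℕ} {A : Type} (δ : Fin n → A → Fin n) (a : A) (p q : Fin n) : ℕ :=
  sInf {k : ℕ | wordAct δ p (List.replicate k a) = q ∨ wordAct δ q (List.replicate k a) = p}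

/-- The cyclic successor `q ↦ q + 1 (mod n)` on `Fin n`. -/
def cyc {n : ℕ} (q : Fin n) : Fin n :=
  ⟨(q.val + 1) % n, Nat.mod_lt _ (by have := q.isLt; omega)⟩

def IsCirculating {n : ℕ} {A : Type} (δ : Fin n → A → Fin n) (a : A) : Prop :=
  ∀ q : Fin n, δ q a = cyc q

def IsContracting {n : ℕ} {A : Type} (δ : Fin n → A → Fin n) (a : A) : Prop :=
  ∀ p q : Fin n, 1 < relDist δ a p q →
    ∃ u : List A, 1 ≤ relDist δ a (wordAct δ p u) (wordAct δ q u) ∧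
      relDist δ a (wordAct δ p u) (wordAct δ q u) < relDist δ a p q

def IsWeaklyContractingPair {n : ℕ} {A : Type} (δ : Fin n → A → Fin n) (a : A) (p q : Fin n) : Prop :=
  ∀ m : ℕ, (∀ u : List A, wordAct δ p u ≠ wordAct δ q u →
      m ∣ Nat.gcd (relDist δ a (wordAct δ p u) (wordAct δ q u)) n) → m = 1

def IsWeaklyContracting {n : ℕ} {A : Type} (δ : Fin n → A → Fin n) (a : A) : Prop :=
  ∀ p q : Fin n, p ≠ q → IsWeaklyContractingPair δ a p q

def IsCongruence {n : ℕ} {A : Type} (δ : Fin n → A → Fin n) (σ : Fin n → Fin n → Prop) : Prop :=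
  Equivalence σ ∧ ∀ (p q : Fin n) (u : List A), σ p q → σ (wordAct δ p u) (wordAct δ q u)

def IsSimple {n : ℕ} {A : Type} (δ : Fin n → A → Fin n) : Prop :=
  ∀ σ : Fin n → Fin n → Prop, IsCongruence δ σ → (∀ x y, σ x y → x = y) ∨ (∀ x y, σ x y)

def IsSynchronizing {n : ℕ} {A : Type} (δ : Fin n → A → Fin n) : Prop :=
  ∃ u : List A, ∀ p q : Fin n, wordAct δ p u = wordAct δ q u

/-- The Černý automaton: `true` is the circulating letter `a`; `false` is `b`,
fixing every state except the last one, which is sent to the first state. -/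
def cerny (n : ℕ) : Fin n → Bool → Fin n :=
  fun q x => if x then cyc q else if q.val = n - 1 then cyc q else q


lemma wordAct_append {n : ℕ} {A : Type} (δ : Fin n → A → Fin n) (p : Fin n) (u v : List A) :
    wordAct δ p (u ++ v) = wordAct δ (wordAct δ p u) v :=
  List.foldl_append ..

lemma cerny_replicate {n : ℕ} (p : Fin n) (k : ℕ) :
    wordAct (cerny n) p (List.replicate k true) = ⟨(p.val + k) % n, Nat.mod_lt _ p.pos⟩ := by
  induction k generalizing p with
  | zero => simp [wordAct, Fin.ext_iff, Nat.mod_eq_of_lt p.isLt]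
  | succ k ih =>
    rw [List.replicate_succ]
    show wordAct (cerny n) (cerny n p true) (List.replicate k true) = _
    rw [ih]
    simp only [cerny, cyc, if_true, Fin.ext_iff]
    rw [Nat.mod_add_mod]
    have h : p.val + 1 + k = p.val + (k + 1) := by omega
    rw [h]

lemma relSet_mem {n : ℕ} (p q : Fin n) :
    (n + q.val - p.val) % n ∈ {k : ℕ | wordAct (cerny n) p (List.replicate k true) = q ∨
      wordAct (cerny n) q (List.replicate k true) = p} := by
  refine Or.inl ?_
  rw [cerny_replicate, Fin.ext_iff]
  show (p.val + (n + q.val - p.val) % n) % n = q.val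
  rw [Nat.add_mod_mod]
  have h : p.val + (n + q.val - p.val) = q.val + n := by have := p.isLt; omega
  rw [h, Nat.add_mod_right, Nat.mod_eq_of_lt q.isLt]

lemma relDist_comm {n : ℕ} {A : Type} (δ : Fin n → A → Fin n) (a : A) (p q : Fin n) :
    relDist δ a p q = relDist δ a q p := by
  unfold relDist
  congr 1
  ext k
  simp only [Set.mem_setOf_eq]
  tauto

lemma relDist_pos {n : ℕ} {p q : Fin n} (h : p ≠ q) : 1 ≤ relDist (cerny n) true p q := by
  rw [Nat.one_le_iff_ne_zero]
  intro h0
  unfold relDist at h0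
  rcases Nat.sInf_eq_zero.mp h0 with h0' | h0'
  · simp [wordAct] at h0'
    rcases h0' with h0' | h0' <;> simp [h0'] at h
  · exact absurd h0' (Set.nonempty_iff_ne_empty.mp ⟨_, relSet_mem p q⟩)

lemma wordAct_single {n : ℕ} {A : Type} (δ : Fin n → A → Fin n) (x : Fin n) (c : A) :
    wordAct δ x [c] = δ x c := rfl

lemma cerny_false {n : ℕ} (x : Fin n) :
    cerny n x false = if x.val = n - 1 then cyc x else x := by
  simp [cerny]

lemma cerny_key {n : ℕ} (p q : Fin n) (hd : 1 < relDist (cerny n) true p q)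
    (hlt : relDist (cerny n) true p q < n)
    (h : (p.val + relDist (cerny n) true p q) % n = q.val) :
    ∃ u : List Bool,
      1 ≤ relDist (cerny n) true (wordAct (cerny n) p u) (wordAct (cerny n) q u) ∧
      relDist (cerny n) true (wordAct (cerny n) p u) (wordAct (cerny n) q u) <
        relDist (cerny n) true p q := by
  have hn : 0 < n := p.pos
  set d := relDist (cerny n) true p q with hdef
  refine ⟨List.replicate (n - 1 - p.val) true ++ [false], ?_⟩
  have hp : wordAct (cerny n) p (List.replicate (n - 1 - p.val) true ++ [false]) = ⟨0, hn⟩ := by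
    rw [wordAct_append, cerny_replicate, wordAct_single, cerny_false]
    have h1 : (p.val + (n - 1 - p.val)) % n = n - 1 := by
      rw [show p.val + (n - 1 - p.val) = n - 1 from by have := p.isLt; omega]
      exact Nat.mod_eq_of_lt (by omega)
    simp only [h1, eq_self_iff_true, if_true, cyc, Fin.mk.injEq]
    rw [show n - 1 + 1 = n from by omega, Nat.mod_self]
  have hq : wordAct (cerny n) q (List.replicate (n - 1 - p.val) true ++ [false]) =
      ⟨d - 1, by omega⟩ := by
    rw [wordAct_append, cerny_replicate, wordAct_single, cerny_false]
    have h1 : (q.val + (n - 1 - p.val)) % n = d - 1 := by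
      rw [← h, Nat.mod_add_mod]
      have h2 : p.val + d + (n - 1 - p.val) = d - 1 + n := by have := p.isLt; omega
      rw [h2, Nat.add_mod_right, Nat.mod_eq_of_lt (by omega)]
    simp only [h1]
    rw [if_neg (by omega)]
  rw [hp, hq]
  constructor
  · refine relDist_pos ?_
    intro heq
    rw [Fin.mk.injEq] at heq
    omega
  · calc relDist (cerny n) true ⟨0, hn⟩ ⟨d - 1, by omega⟩ ≤ d - 1 := by
          apply Nat.sInf_le
          refine Or.inl ?_
          rw [cerny_replicate, Fin.ext_iff]
          show (0 + (d - 1)) % n = d - 1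
          rw [Nat.zero_add, Nat.mod_eq_of_lt (by omega)]
       _ < d := by omega

theorem stmt2 (n : ℕ) : IsContracting (cerny n) true := by
  intro p q hd
  have hn : 0 < n := p.pos
  have hdmem : relDist (cerny n) true p q ∈ {k : ℕ |
      wordAct (cerny n) p (List.replicate k true) = q ∨
      wordAct (cerny n) q (List.replicate k true) = p} :=
    Nat.sInf_mem ⟨_, relSet_mem p q⟩
  have hdlt : relDist (cerny n) true p q < n :=
    lt_of_le_of_lt (Nat.sInf_le (relSet_mem p q)) (Nat.mod_lt _ hn)
  rcases hdmem with hm | hm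
  · refine cerny_key p q hd hdlt ?_
    rw [cerny_replicate, Fin.ext_iff] at hm
    exact hm
  · have hc := relDist_comm (cerny n) true p q
    obtain ⟨u, h1, h2⟩ := cerny_key q p (hc ▸ hd) (hc ▸ hdlt) (by
      rw [cerny_replicate, Fin.ext_iff] at hm
      rw [← hc]
      exact hm)
    refine ⟨u, ?_, ?_⟩
    · rw [relDist_comm]; exact h1
    · rw [relDist_comm, hc]; exact h2
end

section
/- Let A be a circular DFA and p ≠ q states with gcd(d(p,q), n) = k. Then the congruence generated by (p,q) contains a pair (p₁,q₁) with d(p₁,q₁) = k. In particular, if gcd(d(p,q), n) = 1, the congruence generated by (p,q) is the universal relation's refinement making the automaton collapse, i.e., contains a pair at distance 1 and hence (by transitive closure under the cycle) equals the full relation. -/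
/-- The congruence generated by the pair `(p, q)`. -/
def genCong {n : ℕ} {A : Type} (δ : Fin n → A → Fin n) (p q x y : Fin n) : Prop :=
  ∀ σ : Fin n → Fin n → Prop, IsCongruence δ σ → σ p q → σ x y

/-!
Since `a` circulates, the states form the cycle `ℤ/n` and `a^k` acts as `x ↦ x + k`. A
congruence `σ` is therefore translation invariant, and its periods `{d | ∀ x, x σ (x + d)}`
form a subgroup of `ℤ/n`. If `p σ q` this subgroup contains `q - p`, hence
`g = gcd(q - p, n)`; and `g`, a proper divisor of `n`, is at distance exactly `g` from `0`.
Finally `d(p, q) = min(q - p, p - q)` has the same gcd with `n` as `q - p`.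
-/

theorem Nat.two_mul_le_of_dvd_of_lt {g n : ℕ} (hdvd : g ∣ n) (hlt : g < n) : 2 * g ≤ n := by
  obtain ⟨c, rfl⟩ := hdvd
  rcases c with _ | _ | c
  · simp at hlt
  · simp at hlt
  · nlinarith

def Equivalence.periodSubgroup {G : Type*} [AddGroup G] {σ : G → G → Prop} (hσ : Equivalence σ) :
    AddSubgroup G where
  carrier := {d | ∀ x, σ x (x + d)}
  zero_mem' x := by rw [add_zero]; exact hσ.refl x
  add_mem' {d e} hd he x := by rw [← add_assoc]; exact hσ.trans (hd x) (he (x + d))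
  neg_mem' {d} hd x := by
    simpa only [neg_add_cancel_right] using hσ.symm (hd (x + -d))

section Circular

open Fin.CommRing

variable {n : ℕ} [NeZero n] {A : Type} {δ : Fin n → A → Fin n} {a : A}

theorem cyc_eq_add_one (q : Fin n) : cyc q = q + 1 :=
  Fin.ext <| by simp [cyc, Fin.val_add]

theorem wordAct_replicate (ha : IsCirculating δ a) (p : Fin n) (k : ℕ) :
    wordAct δ p (List.replicate k a) = p + k := by
  induction k generalizing p with
  | zero => simp [wordAct]
  | succ k ih =>
    rw [List.replicate_succ, wordAct, List.foldl_cons, ← wordAct, ha, cyc_eq_add_one, ih,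
      Nat.cast_succ, add_comm (k : Fin n), add_assoc]

theorem relDist_eq_min (ha : IsCirculating δ a) (p q : Fin n) :
    relDist δ a p q = min (q - p).val (p - q).val := by
  have hS : {k : ℕ | wordAct δ p (List.replicate k a) = q ∨ wordAct δ q (List.replicate k a) = p}
      = {k : ℕ | (k : Fin n) = q - p ∨ (k : Fin n) = p - q} := by
    ext k
    simp only [Set.mem_ofPred_eq, wordAct_replicate ha, eq_sub_iff_add_eq, add_comm]
  have val_le {d : Fin n} {k : ℕ} (h : (k : Fin n) = d) : d.val ≤ k :=
    h ▸ (Fin.val_natCast k n).symm ▸ Nat.mod_le k n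
  rw [relDist, hS]
  apply le_antisymm
  · rcases min_choice (q - p).val (p - q).val with h | h <;> rw [h] <;>
      exact Nat.sInf_le (by simp [Fin.cast_val_eq_self])
  · obtain h | h := Nat.sInf_mem (s := {k : ℕ | (k : Fin n) = q - p ∨ (k : Fin n) = p - q})
      ⟨(q - p).val, Or.inl (Fin.cast_val_eq_self _)⟩
    · exact (min_le_left _ _).trans (val_le h)
    · exact (min_le_right _ _).trans (val_le h)

theorem gcd_relDist (ha : IsCirculating δ a) (p q : Fin n) :
    Nat.gcd (relDist δ a p q) n = Nat.gcd (q - p).val n := by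
  rw [relDist_eq_min ha, ← neg_sub q p, Fin.val_neg']
  rcases min_choice (q - p).val ((n - (q - p).val) % n) with h | h <;> rw [h]
  rw [← Nat.gcd_rec, Nat.gcd_comm, Nat.gcd_self_sub_left (q - p).isLt.le]

theorem relDist_add_natCast (ha : IsCirculating δ a) (p : Fin n) {m : ℕ} (hm : 2 * m ≤ n) :
    relDist δ a p (p + m) = m := by
  have hmn : m < n := by have := NeZero.pos n; omega
  rw [relDist_eq_min ha, add_sub_cancel_left, sub_add_cancel_left, Fin.val_neg', Fin.val_natCast,
    Nat.mod_eq_of_lt hmn]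
  refine min_eq_left ?_
  rcases Nat.eq_zero_or_pos m with rfl | hm0
  · exact Nat.zero_le _
  · rw [Nat.mod_eq_of_lt (by omega)]; omega

theorem Fin.natCast_mem_of_gcd_dvd {H : AddSubgroup (Fin n)} {d : Fin n} (hd : d ∈ H)
    {m : ℕ} (hm : Nat.gcd d.val n ∣ m) : (m : Fin n) ∈ H := by
  obtain ⟨c, rfl⟩ := hm
  have hgcd : ((Nat.gcd d.val n : ℕ) : Fin n) = Nat.gcdA d.val n • d := by
    rw [← Int.cast_natCast, Nat.gcd_eq_gcd_ab]
    push_cast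
    rw [CharP.cast_eq_zero, zero_mul, add_zero, zsmul_eq_mul, mul_comm]
  rw [Nat.cast_mul, hgcd, ← nsmul_eq_mul']
  exact H.nsmul_mem (H.zsmul_mem hd _) c

namespace IsCongruence

variable {σ : Fin n → Fin n → Prop}

theorem add_right (hσ : IsCongruence δ σ) (ha : IsCirculating δ a) {x y : Fin n} (h : σ x y)
    (d : Fin n) : σ (x + d) (y + d) := by
  simpa only [wordAct_replicate ha, Fin.cast_val_eq_self] using
    hσ.2 x y (List.replicate d.val a) h

theorem sub_mem_periodSubgroup (hσ : IsCongruence δ σ) (ha : IsCirculating δ a) {x y : Fin n}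
    (h : σ x y) : y - x ∈ hσ.1.periodSubgroup := fun z => by
  simpa only [add_sub_cancel, add_sub_left_comm y z x, add_comm] using hσ.add_right ha h (z - x)

end IsCongruence

theorem genCong_add_natCast (ha : IsCirculating δ a) {p q : Fin n} (x : Fin n) {m : ℕ}
    (hm : Nat.gcd (q - p).val n ∣ m) : genCong δ p q x (x + m) := fun _ hσ hpq =>
  Fin.natCast_mem_of_gcd_dvd (hσ.sub_mem_periodSubgroup ha hpq) hm x

theorem exists_genCong_relDist_eq_gcd (ha : IsCirculating δ a) {p q : Fin n} (hpq : p ≠ q) :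
    ∃ p₁ q₁ : Fin n, genCong δ p q p₁ q₁ ∧ relDist δ a p₁ q₁ = Nat.gcd (relDist δ a p q) n := by
  rw [gcd_relDist ha]
  refine ⟨p, _, genCong_add_natCast ha p dvd_rfl, relDist_add_natCast ha p ?_⟩
  have hd : 0 < (q - p).val := Fin.pos_iff_ne_zero.2 (sub_ne_zero.2 hpq.symm)
  exact Nat.two_mul_le_of_dvd_of_lt (Nat.gcd_dvd_right _ n)
    ((Nat.gcd_le_left n hd).trans_lt (q - p).isLt)

theorem genCong_of_gcd_relDist_eq_one (ha : IsCirculating δ a) {p q : Fin n}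
    (h : Nat.gcd (relDist δ a p q) n = 1) (x y : Fin n) : genCong δ p q x y := by
  rw [gcd_relDist ha] at h
  simpa only [Fin.cast_val_eq_self, add_sub_cancel] using
    genCong_add_natCast ha x (m := (y - x).val) (h ▸ one_dvd _)

end Circular

theorem stmt6 (n : ℕ) (A : Type) (δ : Fin n → A → Fin n) (a : A)
    (ha : IsCirculating δ a) (p q : Fin n) (hpq : p ≠ q) (k : ℕ)
    (hk : Nat.gcd (relDist δ a p q) n = k) :
    (∃ p₁ q₁ : Fin n, genCong δ p q p₁ q₁ ∧ relDist δ a p₁ q₁ = k) ∧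
    (k = 1 → (∃ p₁ q₁ : Fin n, genCong δ p q p₁ q₁ ∧ relDist δ a p₁ q₁ = 1) ∧
      ∀ x y : Fin n, genCong δ p q x y) := by
  have : NeZero n := ⟨p.pos.ne'⟩
  subst hk
  exact ⟨exists_genCong_relDist_eq_gcd ha hpq, fun h =>
    ⟨h ▸ exists_genCong_relDist_eq_gcd ha hpq, genCong_of_gcd_relDist_eq_one ha h⟩⟩
end

section
/- Every simple circular DFA is weakly contracting. -/
lemma act_replicate {n : ℕ} {A : Type} (δ : Fin n → A → Fin n) (a : A)
    (ha : IsCirculating δ a) (x : Fin n) (k : ℕ) :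
    (wordAct δ x (List.replicate k a)).val = (x.val + k) % n := by
  induction k generalizing x with
  | zero => simp [wordAct, Nat.mod_eq_of_lt x.isLt]
  | succ k ih =>
    have : List.replicate (k+1) a = a :: List.replicate k a := rfl
    rw [this]
    have h1 : wordAct δ x (a :: List.replicate k a) = wordAct δ (δ x a) (List.replicate k a) := rfl
    rw [h1, ih, ha x]
    show ((x.val + 1) % n + k) % n = (x.val + (k + 1)) % n
    rw [Nat.mod_add_mod]
    ring_nf

lemma relDist_mem {n : ℕ} {A : Type} (δ : Fin n → A → Fin n) (a : A)
    (ha : IsCirculating δ a) (x y : Fin n) :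
    wordAct δ x (List.replicate (relDist δ a x y) a) = y ∨
      wordAct δ y (List.replicate (relDist δ a x y) a) = x := by
  have hne : {k : ℕ | wordAct δ x (List.replicate k a) = y ∨
      wordAct δ y (List.replicate k a) = x}.Nonempty := by
    refine ⟨(n + y.val - x.val) % n, Or.inl ?_⟩
    apply Fin.ext
    rw [act_replicate δ a ha]
    have hx : x.val < n := x.isLt
    have hy : y.val < n := y.isLt
    rw [Nat.add_mod_mod, show x.val + (n + y.val - x.val) = n + y.val by omega,
      Nat.add_mod_left, Nat.mod_eq_of_lt hy]
  exact Nat.sInf_mem hne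

lemma mod_eq_of_dvd_relDist {n : ℕ} {A : Type} (δ : Fin n → A → Fin n) (a : A)
    (ha : IsCirculating δ a) (x y : Fin n) (m : ℕ) (hmn : m ∣ n)
    (hmd : m ∣ relDist δ a x y) : x.val % m = y.val % m := by
  obtain ⟨c, hc⟩ := hmd
  rcases relDist_mem δ a ha x y with h | h
  · have hxy := congrArg Fin.val h
    rw [act_replicate δ a ha] at hxy
    rw [← hxy, Nat.mod_mod_of_dvd _ hmn, hc, Nat.add_mul_mod_self_left]
  · have hxy := congrArg Fin.val h
    rw [act_replicate δ a ha] at hxy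
    rw [← hxy, Nat.mod_mod_of_dvd _ hmn, hc, Nat.add_mul_mod_self_left]

theorem stmt10 (n : ℕ) (A : Type) (δ : Fin n → A → Fin n) (a : A)
    (ha : IsCirculating δ a) (hs : IsSimple δ) :
    IsWeaklyContracting δ a := by
  intro p q hpq m hm
  -- m divides n
  have h0 : m ∣ n := by
    have := hm [] (by simpa [wordAct] using hpq)
    exact dvd_trans this (Nat.gcd_dvd_right _ _)
  -- the generated congruence
  set R : Fin n → Fin n → Prop :=
    fun x y => ∃ u : List A, x = wordAct δ p u ∧ y = wordAct δ q u with hR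
  have hcong : IsCongruence δ (Relation.EqvGen R) := by
    constructor
    · exact Relation.EqvGen.is_equivalence R
    · intro x y u hxy
      induction hxy with
      | rel x y h =>
        obtain ⟨v, rfl, rfl⟩ := h
        exact Relation.EqvGen.rel _ _ ⟨v ++ u, by simp [wordAct, List.foldl_append],
          by simp [wordAct, List.foldl_append]⟩
      | refl x => exact Relation.EqvGen.refl _
      | symm x y _ ih => exact Relation.EqvGen.symm _ _ ih
      | trans x y z _ _ ih1 ih2 => exact Relation.EqvGen.trans _ _ _ ih1 ih2
  -- invariant: related states agree mod m
  have hinv : ∀ x y, Relation.EqvGen R x y → x.val % m = y.val % m := by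
    intro x y h
    induction h with
    | rel x y h =>
      obtain ⟨u, rfl, rfl⟩ := h
      by_cases hne : wordAct δ p u = wordAct δ q u
      · rw [hne]
      · have hd := hm u hne
        exact mod_eq_of_dvd_relDist δ a ha _ _ m h0
          (dvd_trans hd (Nat.gcd_dvd_left _ _))
    | refl x => rfl
    | symm x y _ ih => exact ih.symm
    | trans x y z _ _ ih1 ih2 => exact ih1.trans ih2
  rcases hs (Relation.EqvGen R) hcong with hdiag | huniv
  · exact absurd (hdiag p q (Relation.EqvGen.rel _ _ ⟨[], rfl, rfl⟩)) hpq
  · -- n ≥ 2 since p ≠ q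
    have hn2 : 2 ≤ n := by
      by_contra h
      interval_cases n
      · exact p.elim0
      · exact hpq (Subsingleton.elim p q)
    have h01 : (⟨0, by omega⟩ : Fin n).val % m = (⟨1, by omega⟩ : Fin n).val % m :=
      hinv _ _ (huniv _ _)
    simp only at h01
    rw [Nat.zero_mod] at h01
    exact Nat.dvd_one.mp (Nat.dvd_of_mod_eq_zero h01.symm)
end

section
/- A circular DFA is simple if and only if it is weakly contracting. -/
lemma aux_modsmall {n t : ℕ} (hn : 0 < n) (h : t < 2*n) :
    t % n = if t < n then t else t - n := by
  split_ifs with h'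
  · exact Nat.mod_eq_of_lt h'
  · rw [Nat.mod_eq_sub_mod (by omega)]
    exact Nat.mod_eq_of_lt (by omega)

lemma aux_mod_eq_iff {n x y k : ℕ} (hx : x < n) (hy : y < n) (hk : k < n) :
    (x + k) % n = y ↔ k = (y + n - x) % n := by
  have hn : 0 < n := by omega
  have h1 := aux_modsmall hn (show x + k < 2*n by omega)
  have h2 := aux_modsmall hn (show y + n - x < 2*n by omega)
  rw [h1, h2]
  split_ifs <;> omega

lemma aux_wordAct_cons {n : ℕ} {A : Type} (δ : Fin n → A → Fin n) (x : Fin n) (b : A) (u : List A) :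
    wordAct δ x (b :: u) = wordAct δ (δ x b) u := rfl

lemma aux_wordAct_append {n : ℕ} {A : Type} (δ : Fin n → A → Fin n) (x : Fin n) (u v : List A) :
    wordAct δ x (u ++ v) = wordAct δ (wordAct δ x u) v := by
  simp [wordAct, List.foldl_append]

lemma aux_wordAct_replicate {n : ℕ} {A : Type} {δ : Fin n → A → Fin n} {a : A}
    (ha : IsCirculating δ a) (x : Fin n) (k : ℕ) :
    (wordAct δ x (List.replicate k a)).val = (x.val + k) % n := by
  induction k generalizing x with
  | zero => simp [wordAct]; exact (Nat.mod_eq_of_lt x.isLt).symm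
  | succ k ih =>
    rw [List.replicate_succ, aux_wordAct_cons, ha x, ih]
    show ((x.val + 1) % n + k) % n = _
    rw [Nat.mod_add_mod]
    congr 1
    omega

lemma aux_relDist_eq {n : ℕ} {A : Type} {δ : Fin n → A → Fin n} {a : A}
    (ha : IsCirculating δ a) (x y : Fin n) :
    relDist δ a x y = min ((y.val + n - x.val) % n) ((x.val + n - y.val) % n) := by
  have hn : 0 < n := x.pos
  set d1 := (y.val + n - x.val) % n with hd1def
  set d2 := (x.val + n - y.val) % n with hd2def
  have hd1 : d1 < n := Nat.mod_lt _ hn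
  have hd2 : d2 < n := Nat.mod_lt _ hn
  have hmem1 : wordAct δ x (List.replicate d1 a) = y := by
    apply Fin.ext
    rw [aux_wordAct_replicate ha]
    exact (aux_mod_eq_iff x.isLt y.isLt hd1).mpr rfl
  have hmem2 : wordAct δ y (List.replicate d2 a) = x := by
    apply Fin.ext
    rw [aux_wordAct_replicate ha]
    exact (aux_mod_eq_iff y.isLt x.isLt hd2).mpr rfl
  apply le_antisymm
  · rcases le_total d1 d2 with h | h
    · rw [min_eq_left h]; exact Nat.sInf_le (Or.inl hmem1)
    · rw [min_eq_right h]; exact Nat.sInf_le (Or.inr hmem2)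
  · apply le_csInf ⟨d1, Or.inl hmem1⟩
    rintro k (hk | hk)
    · have hkm : (x.val + k % n) % n = y.val := by
        rw [Nat.add_mod_mod]
        rw [← aux_wordAct_replicate ha, hk]
      have := (aux_mod_eq_iff x.isLt y.isLt (Nat.mod_lt _ hn)).mp hkm
      have hkn : k % n ≤ k := Nat.mod_le _ _
      omega
    · have hkm : (y.val + k % n) % n = x.val := by
        rw [Nat.add_mod_mod]
        rw [← aux_wordAct_replicate ha, hk]
      have := (aux_mod_eq_iff y.isLt x.isLt (Nat.mod_lt _ hn)).mp hkm
      have hkn : k % n ≤ k := Nat.mod_le _ _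
      omega

lemma aux_d1d2 {n x y : ℕ} (hx : x < n) (hy : y < n) :
    ((y + n - x) % n = 0 ∧ (x + n - y) % n = 0) ∨ (y + n - x) % n + (x + n - y) % n = n := by
  have hn : 0 < n := by omega
  have e1 := aux_modsmall hn (show y + n - x < 2*n by omega)
  have e2 := aux_modsmall hn (show x + n - y < 2*n by omega)
  split_ifs at e1 e2 <;> omega

/-- m ∣ n and m ∣ cyclic difference implies m ∣ relDist -/
lemma aux_dvd_relDist {n : ℕ} {A : Type} {δ : Fin n → A → Fin n} {a : A}
    (ha : IsCirculating δ a) (x y : Fin n) {m : ℕ} (hmn : m ∣ n)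
    (hd : m ∣ (y.val + n - x.val) % n) : m ∣ relDist δ a x y := by
  rw [aux_relDist_eq ha]
  have hd2 : m ∣ (x.val + n - y.val) % n := by
    rcases aux_d1d2 x.isLt y.isLt with ⟨h1, h2⟩ | h
    · rw [h2]; exact dvd_zero m
    · have : (x.val + n - y.val) % n = n - (y.val + n - x.val) % n := by omega
      rw [this]; exact Nat.dvd_sub hmn hd
  rcases le_total ((y.val + n - x.val) % n) ((x.val + n - y.val) % n) with h | h
  · rwa [min_eq_left h]
  · rwa [min_eq_right h]

/-- m ∣ n and m ∣ relDist implies vals congruent mod m -/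
lemma aux_relDist_dvd_mod {n : ℕ} {A : Type} {δ : Fin n → A → Fin n} {a : A}
    (ha : IsCirculating δ a) (x y : Fin n) {m : ℕ} (hmn : m ∣ n)
    (hd : m ∣ relDist δ a x y) : x.val % m = y.val % m := by
  rw [aux_relDist_eq ha] at hd
  have hn : 0 < n := x.pos
  -- first, m ∣ d1
  have hd1 : m ∣ (y.val + n - x.val) % n := by
    rcases aux_d1d2 x.isLt y.isLt with ⟨h1, h2⟩ | h
    · rw [h1]; exact dvd_zero m
    · rcases le_total ((y.val + n - x.val) % n) ((x.val + n - y.val) % n) with hle | hle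
      · rwa [min_eq_left hle] at hd
      · rw [min_eq_right hle] at hd
        have : (y.val + n - x.val) % n = n - (x.val + n - y.val) % n := by omega
        rw [this]; exact Nat.dvd_sub hmn hd
  have e1 := aux_modsmall hn (show y.val + n - x.val < 2*n by have := x.isLt; have := y.isLt; omega)
  split_ifs at e1 with hcase
  · -- y + n - x < n, i.e. y < x ; d1 = y + n - x, so m ∣ x - y
    have hxy : y.val ≤ x.val := by have := x.isLt; have := y.isLt; omega
    have : m ∣ x.val - y.val := by
      have h2 : x.val - y.val = n - (y.val + n - x.val) := by have := x.isLt; omega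
      rw [h2]
      exact Nat.dvd_sub hmn (e1 ▸ hd1)
    exact ((Nat.modEq_iff_dvd' hxy).mpr this).symm
  · -- x ≤ y : d1 = y - x
    have hxy : x.val ≤ y.val := by have := x.isLt; have := y.isLt; omega
    have : m ∣ y.val - x.val := by
      have h2 : y.val - x.val = y.val + n - x.val - n := by omega
      rw [h2]; exact e1 ▸ hd1
    exact (Nat.modEq_iff_dvd' hxy).mpr this

theorem stmt11 (n : ℕ) (A : Type) (δ : Fin n → A → Fin n) (a : A)
    (ha : IsCirculating δ a) :
    IsSimple δ ↔ IsWeaklyContracting δ a := by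
  constructor
  · -- Simple → weakly contracting
    intro hs p q hpq m hm
    have hn : 0 < n := p.pos
    have hm0 : m ∣ Nat.gcd (relDist δ a p q) n := hm [] hpq
    have hmn : m ∣ n := dvd_trans hm0 (Nat.gcd_dvd_right _ _)
    by_contra hm1
    have hm2 : 2 ≤ m := by
      rcases Nat.eq_zero_or_pos m with h0 | h0
      · subst h0
        have := Nat.eq_zero_of_zero_dvd hmn
        omega
      · omega
    set S : Fin n → Fin n → Prop :=
      fun x y => ∃ u : List A, wordAct δ p u = x ∧ wordAct δ q u = y with hS
    set σ := Relation.EqvGen S with hσ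
    have hequiv := Relation.EqvGen.is_equivalence S
    have hcong : IsCongruence δ σ := by
      refine ⟨hequiv, ?_⟩
      intro x y u hxy
      induction hxy with
      | rel x y h =>
        rcases h with ⟨v, hv1, hv2⟩
        exact Relation.EqvGen.rel _ _
          ⟨v ++ u, by rw [aux_wordAct_append, hv1], by rw [aux_wordAct_append, hv2]⟩
      | refl x => exact hequiv.refl _
      | symm x y h ih => exact hequiv.symm ih
      | trans x y z h1 h2 ih1 ih2 => exact hequiv.trans ih1 ih2
    have hσpq : σ p q := Relation.EqvGen.rel _ _ ⟨[], rfl, rfl⟩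
    rcases hs σ hcong with hdiag | huniv
    · exact hpq (hdiag p q hσpq)
    · have hmodeq : ∀ x y, σ x y → x.val % m = y.val % m := by
        intro x y h
        induction h with
        | rel x y h =>
          rcases h with ⟨u, hu1, hu2⟩
          by_cases hxy : x = y
          · rw [hxy]
          · have hne : wordAct δ p u ≠ wordAct δ q u := by rw [hu1, hu2]; exact hxy
            have hdv := hm u hne
            rw [hu1, hu2] at hdv
            exact aux_relDist_dvd_mod ha x y hmn (dvd_trans hdv (Nat.gcd_dvd_left _ _))
        | refl x => rfl
        | symm _ _ _ ih => exact ih.symm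
        | trans _ _ _ _ _ ih1 ih2 => exact ih1.trans ih2
      have hn2 : 2 ≤ n := le_trans hm2 (Nat.le_of_dvd hn hmn)
      have h01 := hmodeq ⟨0, by omega⟩ ⟨1, by omega⟩ (huniv _ _)
      have h01' : (0 : ℕ) % m = 1 % m := h01
      rw [Nat.zero_mod, Nat.mod_eq_of_lt (show 1 < m by omega)] at h01'
      omega
  · -- Weakly contracting → simple
    intro hwc σ hcong
    obtain ⟨hequiv, hact⟩ := hcong
    by_cases hdiag : ∀ x y, σ x y → x = y
    · exact Or.inl hdiag
    · right
      push_neg at hdiag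
      obtain ⟨p, q, hσpq, hpq⟩ := hdiag
      have hn : 0 < n := p.pos
      set rep : ℕ → List A := fun k => List.replicate k a with hrep
      set T : ℕ → Prop := fun k => ∀ x : Fin n, σ x (wordAct δ x (rep k)) with hT
      have hcomp : ∀ (x : Fin n) (i j : ℕ),
          wordAct δ (wordAct δ x (rep i)) (rep j) = wordAct δ x (rep (i + j)) := by
        intro x i j
        show wordAct δ (wordAct δ x (List.replicate i a)) (List.replicate j a)
          = wordAct δ x (List.replicate (i + j) a)
        rw [List.replicate_add, aux_wordAct_append]
      have hTdiff : ∀ x y : Fin n, σ x y → T ((y.val + n - x.val) % n) := by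
        intro x y hxy z
        set k := (y.val + n - x.val) % n with hk'
        have hk : k < n := Nat.mod_lt _ hn
        have hyx : wordAct δ x (rep k) = y := Fin.ext (by
          rw [aux_wordAct_replicate ha]
          exact (aux_mod_eq_iff x.isLt y.isLt hk).mpr rfl)
        set j := (z.val + n - x.val) % n with hj'
        have hj : j < n := Nat.mod_lt _ hn
        have hzx : wordAct δ x (rep j) = z := Fin.ext (by
          rw [aux_wordAct_replicate ha]
          exact (aux_mod_eq_iff x.isLt z.isLt hj).mpr rfl)
        have hstep := hact x y (rep j) hxy
        rw [hzx] at hstep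
        have h2 : wordAct δ y (rep j) = wordAct δ z (rep k) := by
          rw [← hyx, ← hzx, hcomp, hcomp, Nat.add_comm]
        rw [h2] at hstep
        exact hstep
      have hT0 : T 0 := fun x => hequiv.refl x
      have hTn : T n := by
        intro x
        have hx : wordAct δ x (rep n) = x := Fin.ext (by
          rw [aux_wordAct_replicate ha, Nat.add_mod_right, Nat.mod_eq_of_lt x.isLt])
        rw [hx]
        exact hequiv.refl x
      have hTadd : ∀ k l, T k → T l → T (k + l) := by
        intro k l hk hl x
        have h1 := hk x
        have h2 := hl (wordAct δ x (rep k))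
        rw [hcomp] at h2
        exact hequiv.trans h1 h2
      have hTsub : ∀ k l, k ≤ l → T k → T l → T (l - k) := by
        intro k l hkl hk hl z
        obtain ⟨x, hx⟩ : ∃ x : Fin n, wordAct δ x (rep k) = z := by
          refine ⟨wordAct δ z (rep (n - k % n)), ?_⟩
          apply Fin.ext
          rw [hcomp, aux_wordAct_replicate ha]
          obtain ⟨t, ht⟩ : ∃ t, t = n * (k / n) := ⟨_, rfl⟩
          have hdm : t + k % n = k := by rw [ht]; exact Nat.div_add_mod k n
          have hml : k % n < n := Nat.mod_lt _ hn
          have e : z.val + (n - k % n + k) = z.val + t + n := by omega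
          rw [e, Nat.add_mod_right, ht, Nat.add_mul_mod_self_left, Nat.mod_eq_of_lt z.isLt]
        have h1 : σ x z := hx ▸ hk x
        have h2 := hl x
        have h3 : wordAct δ x (rep l) = wordAct δ z (rep (l - k)) := by
          rw [← hx, hcomp]
          have e : k + (l - k) = l := by omega
          rw [e]
        rw [h3] at h2
        exact hequiv.trans (hequiv.symm h1) h2
      have hsne : ({k | 0 < k ∧ T k} : Set ℕ).Nonempty := ⟨n, hn, hTn⟩
      obtain ⟨hm0, hTm⟩ := Nat.sInf_mem hsne
      set m := sInf {k | 0 < k ∧ T k} with hmdef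
      have hdvd : ∀ k, T k → m ∣ k := by
        intro k
        induction k using Nat.strong_induction_on with
        | _ k ih =>
          intro hk
          rcases Nat.lt_or_ge k m with h | h
          · rcases Nat.eq_zero_or_pos k with h0 | h0
            · simp [h0]
            · have hle : m ≤ k := Nat.sInf_le (⟨h0, hk⟩ : k ∈ {k | 0 < k ∧ T k})
              omega
          · have hrec := ih (k - m) (by omega) (hTsub m k h hTm hk)
            have h2 : k = (k - m) + m := by omega
            rw [h2]
            exact Nat.dvd_add hrec dvd_rfl
      have hmn : m ∣ n := hdvd n hTn
      have hm1 : m = 1 := by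
        apply hwc p q hpq m
        intro u hu
        have hσu := hact p q u hσpq
        have hTu := hTdiff _ _ hσu
        have hdk := hdvd _ hTu
        exact Nat.dvd_gcd (aux_dvd_relDist ha _ _ hmn hdk) hmn
      have hT1 : T 1 := hm1 ▸ hTm
      have hTall : ∀ k, T k := by
        intro k
        induction k with
        | zero => exact hT0
        | succ k ih => exact hTadd k 1 ih hT1
      intro x y
      have hk : (y.val + n - x.val) % n < n := Nat.mod_lt _ hn
      have hxy : wordAct δ x (rep ((y.val + n - x.val) % n)) = y := Fin.ext (by
        rw [aux_wordAct_replicate ha]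
        exact (aux_mod_eq_iff x.isLt y.isLt hk).mpr rfl)
      exact hxy ▸ hTall _ x
end

section
/- Let C be an n×n circulant matrix with first column w = (v_1,...,v_{n-1}, -Σv_i) where v ≠ 0, and let f_v(x) = v_1 + v_2x + ... + v_{n-1}x^{n-2} - (Σv_i)x^{n-1} be its associated polynomial. If deg(gcd(f_v(x), x^n - 1)) = 1, then the vectors v, Av, A²v, ..., A^{n-1}v span ℂ^{n-1}, where A is the matrix of the cyclic shift acting on zero-sum vectors. -/
/-!
Send `w ∈ ℂ^{n-1}` to the class of `f_w` in `ℂ[X]/(X^n - 1)`. This map is injective because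
`deg f_w < n`, and it turns `A` into multiplication by `X`, so `p(A) v` goes to `p · f_v`.
Every `f_w` is divisible by `X - 1`, and the gcd hypothesis makes `gcd(f_v, X^n - 1)` a unit
multiple of `X - 1`; by Bézout that gcd is a multiple of `f_v` modulo `X^n - 1`. Hence
`f_w ≡ p · f_v` for some `p` of degree `< n`, i.e. `w = p(A) v ∈ span {v, Av, …, A^{n-1} v}`.
-/

def Amat (n : ℕ) : Matrix (Fin (n - 1)) (Fin (n - 1)) ℂ :=
  fun i j => if i.val = 0 then -1 else if i.val = j.val + 1 then 1 else 0

/-- The polynomial `f_v(x) = v_1 + v_2 x + ⋯ + v_{n-1} x^{n-2} - (Σᵢ vᵢ) x^{n-1}`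
associated to the circulant matrix with first column `(v_1, …, v_{n-1}, -Σᵢ vᵢ)`. -/
noncomputable def fpoly (n : ℕ) (v : Fin (n - 1) → ℂ) : Polynomial ℂ :=
  (∑ i : Fin (n - 1), Polynomial.C (v i) * Polynomial.X ^ (i : ℕ))
    - Polynomial.C (∑ i, v i) * Polynomial.X ^ (n - 1)

open Polynomial Matrix

lemma fpoly_eq_sum (n : ℕ) (v : Fin (n - 1) → ℂ) :
    fpoly n v = ∑ i, C (v i) * (X ^ (i : ℕ) - X ^ (n - 1)) := by
  simp only [fpoly, mul_sub, Finset.sum_sub_distrib, map_sum, Finset.sum_mul]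

lemma coeff_fpoly (n : ℕ) (v : Fin (n - 1) → ℂ) (i : Fin (n - 1)) :
    (fpoly n v).coeff i = v i := by
  have hi : (i : ℕ) ≠ n - 1 := i.isLt.ne
  simp only [fpoly, coeff_sub, finsetSum_coeff, coeff_C_mul_X_pow, if_neg hi, sub_zero]
  simp [Fin.val_inj]

lemma fpoly_injective (n : ℕ) : Function.Injective (fpoly n) := fun v w h =>
  funext fun i => by simpa [coeff_fpoly] using congrArg (coeff · i) h

lemma natDegree_fpoly_lt {n : ℕ} (hn : 0 < n) (v : Fin (n - 1) → ℂ) :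
    (fpoly n v).natDegree < n := by
  have hsum : (∑ i : Fin (n - 1), C (v i) * X ^ (i : ℕ)).natDegree ≤ n - 1 :=
    natDegree_sum_le_of_forall_le _ _ fun i _ => (natDegree_C_mul_X_pow_le _ _).trans i.isLt.le
  have := natDegree_sub_le_of_le hsum (natDegree_C_mul_X_pow_le (∑ i, v i) (n - 1))
  unfold fpoly
  omega

lemma X_sub_one_dvd_fpoly (n : ℕ) (v : Fin (n - 1) → ℂ) : X - 1 ∣ fpoly n v := by
  rw [fpoly_eq_sum]
  refine Finset.dvd_sum fun i _ => Dvd.dvd.mul_left ?_ _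
  rw [← sub_sub_sub_cancel_right (X ^ (i : ℕ)) _ (1 : ℂ[X])]
  exact dvd_sub (sub_one_dvd_pow_sub_one X _) (sub_one_dvd_pow_sub_one X _)

lemma Amat_mulVec (k : ℕ) (w : Fin (k + 1) → ℂ) :
    Amat (k + 2) *ᵥ w = Fin.cons (-∑ j, w j) (fun i : Fin k => w i.castSucc) := by
  ext i
  cases i using Fin.cases with
  | zero => simp [Amat, Matrix.mulVec, dotProduct]
  | succ i =>
    have : ∀ j : Fin (k + 1), (i : ℕ) = j ↔ i.castSucc = j := by
      simp [Fin.ext_iff]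
    simp [Amat, Matrix.mulVec, dotProduct, this]

lemma fpoly_Amat_mulVec (k : ℕ) (w : Fin (k + 1) → ℂ) :
    fpoly (k + 2) (Amat (k + 2) *ᵥ w) =
      X * fpoly (k + 2) w + C (∑ i, w i) * (X ^ (k + 2) - 1) := by
  -- `fpoly` unfolded with its index type `Fin (k + 2 - 1)` read as `Fin (k + 1)`
  have hfpoly : ∀ u : Fin (k + 1) → ℂ,
      fpoly (k + 2) u = ∑ i, C (u i) * X ^ (i : ℕ) - C (∑ i, u i) * X ^ (k + 1) :=
    fun _ => rfl
  have hshift : ∑ i : Fin k, C (w i.castSucc) * X ^ ((i : ℕ) + 1)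
      = X * ∑ i : Fin k, C (w i.castSucc) * X ^ (i : ℕ) := by
    rw [Finset.mul_sum]
    exact Finset.sum_congr rfl fun i _ => by ring
  rw [hfpoly, hfpoly, Amat_mulVec, Fin.sum_cons, Fin.sum_univ_succ,
    Fin.sum_univ_castSucc (f := fun i : Fin (k + 1) => C (w i) * X ^ (i : ℕ)),
    Fin.sum_univ_castSucc (f := w)]
  simp only [Fin.cons_zero, Fin.cons_succ, Fin.val_succ, Fin.val_castSucc, Fin.val_zero,
    Fin.val_last, map_add, map_neg, map_sum, pow_zero, hshift]
  ring

theorem Polynomial.monic_X_pow_sub_one {R : Type*} [CommRing R] {n : ℕ} (hn : 0 < n) :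
    (X ^ n - 1 : R[X]).Monic := by
  simpa using monic_X_pow_sub_C (1 : R) hn.ne'

theorem Polynomial.natDegree_X_pow_sub_one {R : Type*} [CommRing R] [Nontrivial R]
    (n : ℕ) : (X ^ n - 1 : R[X]).natDegree = n := by
  simpa using natDegree_X_pow_sub_C (n := n) (r := (1 : R))

section
variable {n : ℕ}

noncomputable def fpolyLinearMap (n : ℕ) : (Fin (n - 1) → ℂ) →ₗ[ℂ] ℂ[X] where
  toFun := fpoly n
  map_add' v w := by
    simp only [fpoly_eq_sum, Pi.add_apply, map_add, add_mul, Finset.sum_add_distrib]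
  map_smul' c v := by
    simp only [fpoly_eq_sum, Pi.smul_apply, smul_eq_mul, map_mul, Finset.smul_sum, smul_eq_C_mul,
      RingHom.id_apply, mul_assoc]

noncomputable def fpolyMod (n : ℕ) :
    (Fin (n - 1) → ℂ) →ₗ[ℂ] AdjoinRoot (X ^ n - 1 : ℂ[X]) :=
  (AdjoinRoot.mkₐ _).toLinearMap ∘ₗ fpolyLinearMap n

lemma fpolyMod_apply (v : Fin (n - 1) → ℂ) :
    fpolyMod n v = AdjoinRoot.mk _ (fpoly n v) := rfl

lemma fpolyMod_injective (hn : 0 < n) : Function.Injective (fpolyMod n) := by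
  refine (injective_iff_map_eq_zero _).2 fun v hv => fpoly_injective n ?_
  rw [show fpoly n 0 = 0 from (fpolyLinearMap n).map_zero]
  by_contra h
  refine AdjoinRoot.mk_ne_zero_of_natDegree_lt (monic_X_pow_sub_one hn) h ?_ hv
  simpa [natDegree_X_pow_sub_one] using natDegree_fpoly_lt hn v

lemma fpolyMod_Amat_mulVec (hn : 2 ≤ n) (w : Fin (n - 1) → ℂ) :
    fpolyMod n (Amat n *ᵥ w) = AdjoinRoot.root _ * fpolyMod n w := by
  obtain ⟨k, rfl⟩ : ∃ k, n = k + 2 := ⟨n - 2, by omega⟩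
  rw [fpolyMod_apply, fpolyMod_apply, fpoly_Amat_mulVec]
  simp [AdjoinRoot.mk_self]

lemma fpolyMod_aeval_mulVec (hn : 2 ≤ n) (p : ℂ[X]) (w : Fin (n - 1) → ℂ) :
    fpolyMod n (aeval (Amat n) p *ᵥ w) = AdjoinRoot.mk _ p * fpolyMod n w := by
  induction p using Polynomial.induction_on generalizing w with
  | C a =>
    rw [aeval_C, Algebra.algebraMap_eq_smul_one, smul_mulVec, one_mulVec, map_smul,
      Algebra.smul_def, AdjoinRoot.algebraMap_eq, AdjoinRoot.mk_C]
  | add p q hp hq => simp [add_mulVec, hp, hq, add_mul]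
  | monomial j a ih =>
    rw [pow_succ, ← mul_assoc, map_mul, aeval_X, ← mulVec_mulVec, ih, fpolyMod_Amat_mulVec hn,
      map_mul _ (C a * X ^ j) X, AdjoinRoot.mk_X]
    ring

end

theorem Matrix.aeval_mulVec_mem_span_pow_mulVec {m R : Type*} [Fintype m] [DecidableEq m]
    [CommRing R] (M : Matrix m m R) (v : m → R) {N : ℕ} {p : R[X]} (hp : p.natDegree < N) :
    aeval M p *ᵥ v ∈ Submodule.span R {w | ∃ j, j < N ∧ w = (M ^ j) *ᵥ v} := by
  rw [aeval_eq_sum_range' hp, sum_mulVec]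
  exact Submodule.sum_mem _ fun j hj => by
    rw [smul_mulVec]
    exact Submodule.smul_mem _ _ (Submodule.subset_span ⟨j, Finset.mem_range.mp hj, rfl⟩)

theorem AdjoinRoot.mk_dvd_mk_gcd {K : Type*} [Field K] [DecidableEq K] (f q : K[X]) :
    mk q f ∣ mk q (EuclideanDomain.gcd f q) :=
  ⟨mk q (EuclideanDomain.gcdA f q), by
    rw [EuclideanDomain.gcd_eq_gcd_ab, map_add, map_mul, map_mul, mk_self, zero_mul, add_zero]⟩

theorem AdjoinRoot.exists_natDegree_lt_mk_eq {R : Type*} [CommRing R] {q : R[X]} (hq : q.Monic)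
    (hq1 : q ≠ 1) (x : AdjoinRoot q) : ∃ r : R[X], r.natDegree < q.natDegree ∧ mk q r = x :=
  ⟨modByMonicHom hq x, by
    obtain ⟨p, rfl⟩ := mk_surjective x
    exact natDegree_modByMonic_lt p hq hq1, mk_leftInverse hq x⟩

theorem stmt16_general (n : ℕ) (hn : 2 ≤ n) (v : Fin (n - 1) → ℂ)
    (hgcd : (EuclideanDomain.gcd (fpoly n v) (Polynomial.X ^ n - 1)).natDegree = 1) :
    Submodule.span ℂ {w : Fin (n - 1) → ℂ | ∃ j, j < n ∧ w = ((Amat n) ^ j).mulVec v}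
      = ⊤ := by
  set q : ℂ[X] := X ^ n - 1
  have hq : q.Monic := monic_X_pow_sub_one (by omega)
  have hq1 : q ≠ 1 := ne_of_apply_ne natDegree <| by
    rw [natDegree_X_pow_sub_one, natDegree_one]
    omega
  have hgcd_assoc : Associated (X - 1) (EuclideanDomain.gcd (fpoly n v) q) := by
    refine associated_of_dvd_of_natDegree_le
      (EuclideanDomain.dvd_gcd (X_sub_one_dvd_fpoly n v) (sub_one_dvd_pow_sub_one X n))
      (fun h => by simp [h] at hgcd) ?_
    simpa [hgcd] using (natDegree_X_sub_C (1 : ℂ)).ge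
  refine eq_top_iff.2 fun w _ => ?_
  obtain ⟨p, hp⟩ : AdjoinRoot.mk q (fpoly n v) ∣ fpolyMod n w :=
    (AdjoinRoot.mk_dvd_mk_gcd _ _).trans
      ((_root_.map_dvd _ hgcd_assoc.symm.dvd).trans (_root_.map_dvd _ (X_sub_one_dvd_fpoly n w)))
  obtain ⟨r, hr, rfl⟩ := AdjoinRoot.exists_natDegree_lt_mk_eq hq hq1 p
  have hw : w = aeval (Amat n) r *ᵥ v := by
    refine fpolyMod_injective (by omega) ?_
    rw [hp, fpolyMod_aeval_mulVec hn, mul_comm, fpolyMod_apply]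
  rw [hw]
  exact Matrix.aeval_mulVec_mem_span_pow_mulVec _ _ (hr.trans_eq (natDegree_X_pow_sub_one n))

theorem stmt16 (n : ℕ) (hn : 2 ≤ n) (v : Fin (n - 1) → ℂ) (hv : v ≠ 0)
    (hgcd : (EuclideanDomain.gcd (fpoly n v) (Polynomial.X ^ n - 1)).natDegree = 1) :
    Submodule.span ℂ {w : Fin (n - 1) → ℂ | ∃ j, j < n ∧ w = ((Amat n) ^ j).mulVec v}
      = ⊤ :=
  stmt16_general n hn v hgcd
end

section
/- The rank of an n×n complex circulant matrix C with first column (c_0, c_1, ..., c_{n-1}) equals n - deg(gcd(f(x), x^n - 1)), where f(x) = c_0 + c_1x + ... + c_{n-1}x^{n-1}. -/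
/-!
Over a field containing a primitive `n`-th root of unity `ζ`, the vectors `i ↦ ζ^(-k i)` are
eigenvectors of the circulant matrix with eigenvalues `f(ζ^k)`, and they form an invertible
Vandermonde matrix; so the rank is the number of `n`-th roots of unity that are not roots of `f`.
Since `X^n - 1` splits with simple roots `ζ^k`, the degree of `gcd(f, X^n - 1)` is the number of
`n`-th roots of unity that are roots of `f`.
-/

open Polynomial Matrix Finset

def Fin.powAddChar {M : Type*} [Monoid M] {n : ℕ} [NeZero n] {ω : M} (hω : ω ^ n = 1) :
    AddChar (Fin n) M where
  toFun k := ω ^ (k : ℕ)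
  map_zero_eq_one' := by simp
  map_add_eq_mul' a b := by rw [Fin.val_add, ← pow_eq_pow_mod _ hω, pow_add]

@[simp]
theorem Fin.powAddChar_apply {M : Type*} [Monoid M] {n : ℕ} [NeZero n] {ω : M}
    (hω : ω ^ n = 1) (k : Fin n) : Fin.powAddChar hω k = ω ^ (k : ℕ) := rfl

theorem IsPrimitiveRoot.pow_pow_eq_one {M : Type*} [CommMonoid M] {n : ℕ} {ζ : M}
    (hζ : IsPrimitiveRoot ζ n) (k : ℕ) : (ζ ^ k) ^ n = 1 := by
  rw [← pow_mul, mul_comm, pow_mul, hζ.pow_eq_one, one_pow]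

theorem IsPrimitiveRoot.card_filter_nthRootsFinset {R : Type*} [CommRing R] [IsDomain R]
    {n : ℕ} [NeZero n] {ζ : R} (hζ : IsPrimitiveRoot ζ n) (P : R → Prop) [DecidablePred P] :
    #{a ∈ nthRootsFinset n (1 : R) | P a} = #{k : Fin n | P (ζ ^ (k : ℕ))} := by
  symm
  refine card_bij (fun k _ => ζ ^ (k : ℕ)) (fun k hk => ?_) (fun a _ b _ h => ?_) (fun a ha => ?_)
  · exact mem_filter.mpr ⟨(Polynomial.mem_nthRootsFinset (NeZero.pos n) 1).mpr
      (hζ.pow_pow_eq_one k), (mem_filter.mp hk).2⟩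
  · exact Fin.val_injective (hζ.pow_inj a.isLt b.isLt h)
  · obtain ⟨hroot, hP⟩ := mem_filter.mp ha
    obtain ⟨k, hk, rfl⟩ :=
      hζ.eq_pow_of_pow_eq_one ((Polynomial.mem_nthRootsFinset (NeZero.pos n) 1).mp hroot)
    exact ⟨⟨k, hk⟩, mem_filter.mpr ⟨mem_univ _, hP⟩, rfl⟩

namespace Polynomial

variable {K : Type*} [Field K] [DecidableEq K[X]]

theorem isRoot_gcd_iff {f g : K[X]} {a : K} :
    (EuclideanDomain.gcd f g).IsRoot a ↔ f.IsRoot a ∧ g.IsRoot a := by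
  simp only [← dvd_iff_isRoot]
  exact ⟨fun h => ⟨h.trans (EuclideanDomain.gcd_dvd_left f g),
    h.trans (EuclideanDomain.gcd_dvd_right f g)⟩, fun h => EuclideanDomain.dvd_gcd h.1 h.2⟩

theorem natDegree_gcd_eq_card_filter_isRoot [DecidableEq K] {p : K[X]} (hp : p ≠ 0)
    (hsplit : p.Splits) (hnodup : p.roots.Nodup) (f : K[X]) :
    (EuclideanDomain.gcd f p).natDegree = #{a ∈ p.roots.toFinset | f.IsRoot a} := by
  have hdp : EuclideanDomain.gcd f p ∣ p := EuclideanDomain.gcd_dvd_right f p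
  have hd0 : EuclideanDomain.gcd f p ≠ 0 := fun h => hp (zero_dvd_iff.mp (h ▸ hdp))
  rw [(hsplit.of_dvd hp hdp).natDegree_eq_card_roots,
    ← Multiset.toFinset_card_of_nodup (Multiset.nodup_of_le (roots.le_of_dvd hp hdp) hnodup)]
  congr 1
  ext a
  rw [Multiset.mem_toFinset, mem_roots hd0, isRoot_gcd_iff, mem_filter, Multiset.mem_toFinset,
    mem_roots hp, and_comm]

theorem natDegree_gcd_X_pow_sub_one [DecidableEq K] {n : ℕ} [NeZero n] {ζ : K}
    (hζ : IsPrimitiveRoot ζ n) (f : K[X]) :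
    (EuclideanDomain.gcd f (X ^ n - 1)).natDegree = #{k : Fin n | f.IsRoot (ζ ^ (k : ℕ))} := by
  rw [← C_1, natDegree_gcd_eq_card_filter_isRoot (X_pow_sub_C_ne_zero (NeZero.pos n) 1)
    (X_pow_sub_C_splits_of_isPrimitiveRoot hζ (one_pow n)) hζ.nthRoots_one_nodup, ← nthRoots,
    ← nthRootsFinset_def, hζ.card_filter_nthRootsFinset]

end Polynomial

namespace Matrix

theorem circulant_mulVec_addChar {G R : Type*} [AddCommGroup G] [Fintype G] [CommRing R]
    (c : G → R) (ψ : AddChar G R) :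
    circulant c *ᵥ (fun i => ψ (-i)) = (∑ m, c m * ψ m) • fun i => ψ (-i) := by
  ext j
  simp only [mulVec, dotProduct, circulant_apply, Pi.smul_apply, smul_eq_mul, sum_mul]
  refine Fintype.sum_equiv (Equiv.subLeft j) _ _ fun m => ?_
  rw [Equiv.subLeft_apply, mul_assoc, ← AddChar.map_add_eq_mul, show j - m + -j = -m by abel]

theorem rank_eq_card_of_mulVec_transpose_eq_smul {K m : Type*} [Field K] [DecidableEq K]
    [Fintype m] [DecidableEq m] {A W : Matrix m m K} (hW : IsUnit W.det) (d : m → K)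
    (h : ∀ k, A *ᵥ Wᵀ k = d k • Wᵀ k) : A.rank = #{k | d k ≠ 0} := by
  have hAW : A * W = W * diagonal d := by
    ext i k
    rw [mul_diagonal, mul_apply, mul_comm]
    exact congrFun (h k) i
  calc A.rank = (A * W).rank := (rank_mul_eq_left_of_isUnit_det W A hW).symm
    _ = (diagonal d).rank := by rw [hAW, rank_mul_eq_right_of_isUnit_det W _ hW]
    _ = #{k | d k ≠ 0} := by rw [rank_diagonal, Fintype.card_subtype]

theorem rank_circulant_eq_card {K : Type*} [Field K] [DecidableEq K] {n : ℕ} [NeZero n] {ζ : K}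
    (hζ : IsPrimitiveRoot ζ n) (c : Fin n → K) :
    (circulant c).rank = #{k : Fin n | ∑ m, c m * (ζ ^ (k : ℕ)) ^ (m : ℕ) ≠ 0} := by
  set W := vandermonde fun i : Fin n => ζ ^ ((-i : Fin n) : ℕ)
  have hW : IsUnit W.det := by
    refine isUnit_iff_ne_zero.mpr (det_vandermonde_ne_zero_iff.mpr fun a b hab => ?_)
    exact neg_injective (Fin.val_injective (hζ.pow_inj (Fin.isLt _) (Fin.isLt _) hab))
  refine rank_eq_card_of_mulVec_transpose_eq_smul hW _ fun k => ?_
  have hcol : Wᵀ k = fun i => Fin.powAddChar (hζ.pow_pow_eq_one k) (-i) := by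
    ext i
    simp only [transpose_apply, W, vandermonde_apply, Fin.powAddChar_apply, ← pow_mul, mul_comm]
  simpa only [hcol, Fin.powAddChar_apply] using
    circulant_mulVec_addChar c (Fin.powAddChar (hζ.pow_pow_eq_one k))

theorem rank_circulant_add_natDegree_gcd {K : Type*} [Field K] [DecidableEq K]
    [DecidableEq K[X]] {n : ℕ} [NeZero n] {ζ : K} (hζ : IsPrimitiveRoot ζ n) (c : Fin n → K) :
    (circulant c).rank
      + (EuclideanDomain.gcd (∑ i : Fin n, C (c i) * X ^ (i : ℕ)) (X ^ n - 1)).natDegree = n := by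
  have heval (z : K) : (∑ i : Fin n, C (c i) * X ^ (i : ℕ)).eval z = ∑ m, c m * z ^ (m : ℕ) := by
    simp [eval_finsetSum]
  rw [rank_circulant_eq_card hζ, natDegree_gcd_X_pow_sub_one hζ]
  simp only [IsRoot.def, heval]
  rw [add_comm, card_filter_add_card_filter_not, card_univ, Fintype.card_fin]

end Matrix

theorem stmt17 (n : ℕ) (hn : 0 < n) (c : Fin n → ℂ) :
    (Matrix.circulant c).rank
      = n - (EuclideanDomain.gcd
          (∑ i : Fin n, Polynomial.C (c i) * Polynomial.X ^ (i : ℕ))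
          (Polynomial.X ^ n - 1)).natDegree := by
  have : NeZero n := ⟨hn.ne'⟩
  exact Nat.eq_sub_of_add_eq
    (rank_circulant_add_natDegree_gcd (Complex.isPrimitiveRoot_exp n hn.ne') c)
end

section
/- The 3-state automaton on states {q_1,q_2,q_3} with alphabet {a,b}, where a acts as the cycle q_1→q_2→q_3→q_1 and b fixes q_1, sends q_2 to q_1, and sends q_3 to q_1, is synchronizing, and the transition monoid acting on the zero-sum plane in ℂ³ leaves invariant the complex line spanned by v = (e^{2πi/3}, e^{4πi/3}) (in the basis {q_2-q_1, q_3-q_1}), while no nonzero rational vector spans an invariant line. -/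
/-- The linear action of a word on `K`-linear combinations of states. -/
def actVec {n : ℕ} {A : Type} {K : Type} [Semiring K]
    (δ : Fin n → A → Fin n) (v : Fin n → K) (u : List A) : Fin n → K :=
  fun j => ∑ i, if wordAct δ i u = j then v i else 0

/-- The 3-state automaton: `true` (= `a`) is the 3-cycle, `false` (= `b`)
sends every state to the first state. -/
def delta18 : Fin 3 → Bool → Fin 3 := fun q x => if x then q + 1 else 0

/-- The vector of `ℂQ` corresponding to `(e^{2πi/3}, e^{4πi/3})` in the basis
`{q_2 - q_1, q_3 - q_1}` of the zero-sum plane. -/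
noncomputable def w18 : Fin 3 → ℂ :=
  ![-(Complex.exp (2 * Real.pi * Complex.I / 3) + Complex.exp (4 * Real.pi * Complex.I / 3)),
    Complex.exp (2 * Real.pi * Complex.I / 3),
    Complex.exp (4 * Real.pi * Complex.I / 3)]

section ActVec

variable {n : ℕ} {A K : Type} [Semiring K] (δ : Fin n → A → Fin n)

theorem actVec_nil (v : Fin n → K) : actVec δ v [] = v := by
  funext j
  exact (Finset.sum_ite_eq' Finset.univ j v).trans (if_pos (Finset.mem_univ j))

theorem actVec_append (v : Fin n → K) (u₁ u₂ : List A) :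
    actVec δ v (u₁ ++ u₂) = actVec δ (actVec δ v u₁) u₂ := by
  funext j
  unfold actVec wordAct
  simp only [List.foldl_append, Finset.ite_sum_zero]
  rw [eq_comm, Finset.sum_comm]
  refine Finset.sum_congr rfl fun i _ => ?_
  rw [Finset.sum_eq_single (u₁.foldl δ i) (fun k _ hk => by simp [Ne.symm hk]) (by simp)]
  simp

theorem actVec_smul (c : K) (v : Fin n → K) (u : List A) :
    actVec δ (c • v) u = c • actVec δ v u := by
  funext j
  simp [actVec, Finset.mul_sum, mul_ite]

theorem actVec_singleton_of_forall_eq_iff {x : A} {g : Fin n → Fin n}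
    (hg : ∀ i j, δ i x = j ↔ i = g j) (v : Fin n → K) :
    actVec δ v [x] = fun j => v (g j) := by
  funext j
  simp [actVec, wordAct, hg]

theorem actVec_singleton_of_forall_eq {x : A} {q : Fin n} (hq : ∀ i, δ i x = q)
    (v : Fin n → K) : actVec δ v [x] = Pi.single q (∑ i, v i) := by
  funext j
  by_cases h : q = j
  · subst h
    simp [actVec, wordAct, hq]
  · simp [actVec, wordAct, hq, h, Ne.symm h]

theorem exists_actVec_eq_smul_of_forall_singleton {v : Fin n → K}
    (hv : ∀ x, ∃ c : K, actVec δ v [x] = c • v) (u : List A) : ∃ c : K, actVec δ v u = c • v := by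
  induction u with
  | nil => exact ⟨1, by rw [actVec_nil, one_smul]⟩
  | cons x u ih =>
    obtain ⟨c, hc⟩ := ih
    obtain ⟨d, hd⟩ := hv x
    exact ⟨d * c, by rw [← List.singleton_append, actVec_append, hd, actVec_smul, hc, smul_smul]⟩

end ActVec

section Delta18

variable {K : Type} [Semiring K]

theorem actVec_delta18_true (v : Fin 3 → K) : actVec delta18 v [true] = fun j => v (j - 1) :=
  actVec_singleton_of_forall_eq_iff delta18 (fun _ _ => eq_sub_iff_add_eq.symm) v

theorem actVec_delta18_false (v : Fin 3 → K) :
    actVec delta18 v [false] = Pi.single 0 (∑ i, v i) :=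
  actVec_singleton_of_forall_eq delta18 (fun _ => rfl) v

end Delta18

local notation "ζ₃" => Complex.exp (2 * Real.pi * Complex.I / 3)

theorem isPrimitiveRoot_zeta_three : IsPrimitiveRoot ζ₃ 3 := by
  simpa using Complex.isPrimitiveRoot_exp 3 (by norm_num)

theorem w18_eq : w18 = ![1, ζ₃, ζ₃ ^ 2] := by
  have hsum := isPrimitiveRoot_zeta_three.geom_sum_eq_zero (by norm_num)
  simp only [Finset.sum_range_succ, Finset.sum_range_zero, pow_zero, pow_one, zero_add] at hsum
  have hexp : Complex.exp (4 * Real.pi * Complex.I / 3) = ζ₃ ^ 2 := by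
    rw [sq, ← Complex.exp_add]
    ring_nf
  ext j
  fin_cases j
  · show -(ζ₃ + Complex.exp (4 * Real.pi * Complex.I / 3)) = 1
    rw [hexp]
    linear_combination -hsum
  · rfl
  · exact hexp

theorem sum_w18 : ∑ i, w18 i = 0 := by
  simp [w18, Fin.sum_univ_three]

theorem w18_sub_one_eq_smul : (fun j => w18 (j - 1)) = ζ₃ ^ 2 • w18 := by
  have h3 := isPrimitiveRoot_zeta_three.pow_eq_one
  rw [w18_eq]
  ext j
  fin_cases j
  · show ζ₃ ^ 2 = ζ₃ ^ 2 * 1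
    rw [mul_one]
  · show 1 = ζ₃ ^ 2 * ζ₃
    linear_combination -h3
  · show ζ₃ = ζ₃ ^ 2 * ζ₃ ^ 2
    linear_combination -ζ₃ * h3

theorem eq_zero_of_shift_eq_smul {K : Type} [Field K] [LinearOrder K] [IsStrictOrderedRing K]
    {r : Fin 3 → K} {c : K} (h : ∀ j, r (j - 1) = c * r j) (hsum : ∑ i, r i = 0) : r = 0 := by
  have h0 : r 2 = c * r 0 := h 0
  have h1 : r 0 = c * r 1 := h 1
  have h2 : r 1 = c * r 2 := h 2
  rw [Fin.sum_univ_three] at hsum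
  by_cases hr0 : r 0 = 0
  · have hr2 : r 2 = 0 := by rw [h0, hr0, mul_zero]
    have hr1 : r 1 = 0 := by linear_combination hsum - hr0 - hr2
    ext j
    fin_cases j <;> simpa
  · have hc3 : c ^ 3 = 1 := by
      refine mul_right_cancel₀ hr0 ?_
      linear_combination -h1 - c * h2 - c ^ 2 * h0
    have hc : c = 1 := (Odd.pow_inj (by decide)).1 (hc3.trans (one_pow 3).symm)
    subst hc
    exact absurd (by linear_combination (hsum + 2 * h1 + h2) / 3) hr0

theorem stmt18 :
    IsSynchronizing delta18 ∧
    (∀ u : List Bool, ∃ c : ℂ, actVec delta18 w18 u = c • w18) ∧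
    (∀ r : Fin 3 → ℚ, (∑ i, r i = 0) → r ≠ 0 →
        ¬ ∀ u : List Bool, ∃ c : ℚ, actVec delta18 r u = c • r) := by
  refine ⟨⟨[false], fun p q => rfl⟩, ?_, ?_⟩
  · refine exists_actVec_eq_smul_of_forall_singleton delta18 fun x => ?_
    cases x
    · exact ⟨0, by rw [actVec_delta18_false, sum_w18, Pi.single_zero, zero_smul]⟩
    · exact ⟨ζ₃ ^ 2, by rw [actVec_delta18_true, w18_sub_one_eq_smul]⟩
  · intro r hsum hr hinv
    obtain ⟨c, hc⟩ := hinv [true]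
    rw [actVec_delta18_true] at hc
    exact hr (eq_zero_of_shift_eq_smul (fun j => congrFun hc j) hsum)
end
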